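/- For every odd integer n with n ≥ 3, the 2-ranking number satisfies χ₂(C₃ □ C_n) > 5. -/

import Mathlib

/-- `f` is a 2-ranking of `G`: every path of length 1 or 2 is well-ranked, i.e. the
endpoints of each edge get distinct ranks, and whenever `u, w, v` is a path of length 2
whose endpoints `u, v` get equal ranks, the interior vertex `w` gets a higher rank. -/
def IsTwoRanking {V : Type*} (G : SimpleGraph V) (f : V → ℕ) : Prop :=
  (∀ u v, G.Adj u v → f u ≠ f v) ∧
  ∀ u v w, G.Adj u w → G.Adj w v → u ≠ v → f u = f v → f u < f w

/-- The 2-ranking number `χ₂(G)`: the least `n` such that `G` has a 2-ranking using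
`n` ranks (ranks taken from `{0, …, n-1}`). -/
noncomputable def twoRankingNumber {V : Type*} (G : SimpleGraph V) : ℕ :=
  sInf {n | ∃ f : V → ℕ, IsTwoRanking G f ∧ ∀ v, f v < n}

/-!
In a 2-ranking of `K₃ □ H` with ranks `0, …, 4`, of the two triangles over an edge of `H`
exactly one contains the rank `4`: it cannot be in both, since the two copies of `4` would be
the ends of a 2-path through a smaller rank, and a finite check rules out neither. Hence
"the triangle over `x` contains rank `4`" is a proper 2-colouring of `H`, which an odd cycle
does not have.
-/

open SimpleGraph

section

variable {V : Type*}

lemma IsTwoRanking.of_injective {G : SimpleGraph V} {f : V → ℕ} (hf : Function.Injective f) :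
    IsTwoRanking G f :=
  ⟨fun _ _ huv h => huv.ne (hf h), fun _ _ _ _ _ huv h => absurd (hf h) huv⟩

lemma exists_isTwoRanking_lt_twoRankingNumber [Finite V] (G : SimpleGraph V) :
    ∃ f, IsTwoRanking G f ∧ ∀ v, f v < twoRankingNumber G := by
  let e := Finite.equivFin V
  have hne : {n | ∃ f : V → ℕ, IsTwoRanking G f ∧ ∀ v, f v < n}.Nonempty :=
    ⟨Nat.card V, fun v => e v, .of_injective (Fin.val_injective.comp e.injective),
      fun v => (e v).isLt⟩
  exact Nat.sInf_mem hne

-- The hypotheses say that `(i, 0) ↦ b i`, `(i, 1) ↦ c i` is a 2-ranking of the prism `K₃ □ K₂`.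
set_option maxRecDepth 40000 in
set_option synthInstance.maxSize 1000 in
lemma prism_exists_eq_four_iff_not (b c : Fin 3 → Fin 5)
    (hb : ∀ i i', i ≠ i' → b i ≠ b i')
    (hc : ∀ i i', i ≠ i' → c i ≠ c i')
    (hbc : ∀ i, b i ≠ c i)
    (hpath : ∀ i i', i ≠ i' → b i = c i' → b i < b i' ∧ b i < c i) :
    (∃ i, b i = 4) ↔ ¬ ∃ i, c i = 4 := by
  revert b c
  decide

variable {H : SimpleGraph V} {f : Fin 3 × V → ℕ}

lemma IsTwoRanking.exists_eq_four_iff_not (hf : IsTwoRanking (⊤ □ H) f) (h5 : ∀ v, f v < 5)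
    {x y : V} (hxy : H.Adj x y) : (∃ i, f (i, x) = 4) ↔ ¬ ∃ i, f (i, y) = 4 := by
  have hcol (z : V) (i i' : Fin 3) (h : i ≠ i') : (⊤ □ H).Adj (i, z) (i', z) :=
    boxProd_adj.2 (.inl ⟨h, rfl⟩)
  have hrow (i : Fin 3) : (⊤ □ H).Adj (i, x) (i, y) := boxProd_adj.2 (.inr ⟨hxy, rfl⟩)
  have key := prism_exists_eq_four_iff_not (fun i => ⟨f (i, x), h5 _⟩) (fun i => ⟨f (i, y), h5 _⟩)
    (fun i i' hne heq => hf.1 _ _ (hcol x i i' hne) (Fin.val_eq_of_eq heq))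
    (fun i i' hne heq => hf.1 _ _ (hcol y i i' hne) (Fin.val_eq_of_eq heq))
    (fun i heq => hf.1 _ _ (hrow i) (Fin.val_eq_of_eq heq))
    (fun i i' hne heq =>
      have huv : (i, x) ≠ (i', y) := fun h => hne (congrArg Prod.fst h)
      ⟨hf.2 _ _ _ (hcol x i i' hne) (hrow i') huv (Fin.val_eq_of_eq heq),
        hf.2 _ _ _ (hrow i) (hcol y i i' hne) huv (Fin.val_eq_of_eq heq)⟩)
  simpa [Fin.ext_iff] using key

lemma IsTwoRanking.colorable_two_of_lt_five (hf : IsTwoRanking (⊤ □ H) f) (h5 : ∀ v, f v < 5) :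
    H.Colorable 2 := by
  let c : H.Coloring Prop := Coloring.mk (fun x => ∃ i, f (i, x) = 4) fun hxy h =>
    iff_not_self (h ▸ hf.exists_eq_four_iff_not h5 hxy)
  simpa using c.colorable

end

open SimpleGraph in
/-- For every odd `n ≥ 3`, `χ₂(C₃ □ C_n) > 5`. -/
theorem twoRankingNumber_triangle_cycle_gt_five (n : ℕ) (hn : 3 ≤ n) (hodd : Odd n) :
    5 < twoRankingNumber (cycleGraph 3 □ cycleGraph n) := by
  obtain ⟨f, hf, hlt⟩ := exists_isTwoRanking_lt_twoRankingNumber (cycleGraph 3 □ cycleGraph n)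
  by_contra! hle
  rw [cycleGraph_three_eq_top] at hf
  have h2 := (hf.colorable_two_of_lt_five fun v => (hlt v).trans_le hle).chromaticNumber_le
  rw [chromaticNumber_cycleGraph_of_odd n (by omega) hodd] at h2
  exact absurd h2 (by decide)
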